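/- arXiv:2405.04667 — 2 statements merged into one kernel-verified Lean document; each statement's English description precedes it below -/
import Mathlib

section
/- Let φ be a continuous semiflow on a compact metric space X, D ⊂ X, I : D → X an impulse, and ψ the associated impulsive semiflow with impulsive trajectories γ_x. If x ∈ Ω(ψ) \ D is a non-wandering point not lying in D, then γ_x(t) ∈ Ω(ψ) for every 0 ≤ t < τ₁(x), where τ₁(x) is the first hitting time of x to D. -/
open scoped ENNReal

/-- Invariance of the non-wandering set of an impulsive semiflow before hitting
the impulsive region: if `x ∈ Ω(ψ) \ D` then `γ_x(t) = ψ t x ∈ Ω(ψ)` for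
`0 ≤ t < τ₁ x`. -/
theorem stmt1
    {X : Type*} [MetricSpace X] [CompactSpace X]
    (φ ψ : ℝ → X → X)
    (hφc : Continuous fun p : ℝ × X => φ p.1 p.2)
    (hφ0 : ∀ x, φ 0 x = x)
    (hφadd : ∀ s t : ℝ, 0 ≤ s → 0 ≤ t → ∀ x, φ (s + t) x = φ s (φ t x))
    (hψ0 : ∀ x, ψ 0 x = x)
    (hψadd : ∀ s t : ℝ, 0 ≤ s → 0 ≤ t → ∀ x, ψ (s + t) x = ψ s (ψ t x))
    (D : Set X) (hDclosed : IsClosed D)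
    (I : X → X) (hI : ∀ d ∈ D, I d ∉ D)
    (τ₁ : X → ℝ≥0∞)
    (hτ₁ : ∀ x, τ₁ x = sInf {s : ℝ≥0∞ | ∃ t : ℝ, 0 < t ∧ φ t x ∈ D ∧ s = ENNReal.ofReal t})
    -- the impulsive trajectory coincides with the original flow before the first hit of `D`
    (hψφ : ∀ x, x ∉ D → ∀ t : ℝ, 0 ≤ t → ENNReal.ofReal t < τ₁ x → ψ t x = φ t x)
    (Ω : Set X)
    (hΩ : Ω = {z | ∀ U : Set X, IsOpen U → z ∈ U →
      ∃ y ∈ U, ∃ t : ℝ, 0 < t ∧ ψ t y ∈ U})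
    (x : X) (hx : x ∈ Ω) (hxD : x ∉ D)
    (t : ℝ) (ht0 : 0 ≤ t) (ht : ENNReal.ofReal t < τ₁ x) :
    ψ t x ∈ Ω := by
  subst hΩ
  intro U hUopen hU
  -- choose t' > t with ofReal t' < τ₁ x
  obtain ⟨r, hr1, hr2⟩ := exists_between ht
  have hrtop : r ≠ ⊤ := (hr2.trans_le le_top).ne
  set t' : ℝ := r.toReal with ht'def
  have ht'0 : 0 ≤ t' := ENNReal.toReal_nonneg
  have hofr : ENNReal.ofReal t' = r := ENNReal.ofReal_toReal hrtop
  have htt' : t < t' := by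
    have := (ENNReal.ofReal_lt_iff_lt_toReal ht0 hrtop).mp hr1
    exact this
  -- φ s x ∉ D for all s ∈ [0, t']
  have hmiss : ∀ s ∈ Set.Icc (0:ℝ) t', φ s x ∉ D := by
    intro s hs hsD
    rcases eq_or_lt_of_le hs.1 with h0 | h0
    · rw [← h0, hφ0] at hsD; exact hxD hsD
    · have : τ₁ x ≤ ENNReal.ofReal s := by
        rw [hτ₁]; exact sInf_le ⟨s, h0, hsD, rfl⟩
      have : τ₁ x ≤ r := this.trans (by rw [← hofr]; exact ENNReal.ofReal_le_ofReal hs.2)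
      exact absurd hr2 this.not_gt
  -- tube lemma
  have hn : IsOpen ((fun p : ℝ × X => φ p.1 p.2) ⁻¹' Dᶜ) :=
    hDclosed.isOpen_compl.preimage hφc
  have hsub : Set.Icc (0:ℝ) t' ×ˢ ({x} : Set X) ⊆ (fun p : ℝ × X => φ p.1 p.2) ⁻¹' Dᶜ := by
    rintro ⟨s, y⟩ ⟨hs, hy⟩
    rcases hy with rfl
    exact hmiss s hs
  obtain ⟨u, v, huo, hvo, hIu, hxv, huv⟩ :=
    generalized_tube_lemma isCompact_Icc isCompact_singleton hn hsub
  have hxV : x ∈ v := hxv rfl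
  -- key properties of points in v
  have hvD : ∀ z ∈ v, ∀ s ∈ Set.Icc (0:ℝ) t', φ s z ∉ D := by
    intro z hz s hs
    have hmem : ((s, z) : ℝ × X) ∈ u ×ˢ v := ⟨hIu hs, hz⟩
    exact huv hmem
  have hvnD : ∀ z ∈ v, z ∉ D := fun z hz => by
    have := hvD z hz 0 ⟨le_refl _, ht'0⟩
    rwa [hφ0] at this
  have hvτ : ∀ z ∈ v, ENNReal.ofReal t < τ₁ z := by
    intro z hz
    refine lt_of_lt_of_le hr1 ?_
    rw [hτ₁]
    refine le_sInf ?_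
    rintro a ⟨s, hs0, hsD, rfl⟩
    have hst' : t' < s := by
      by_contra h
      exact hvD z hz s ⟨hs0.le, not_lt.mp h⟩ hsD
    rw [← hofr]
    exact ENNReal.ofReal_le_ofReal hst'.le
  have hvψφ : ∀ z ∈ v, ψ t z = φ t z := fun z hz =>
    hψφ z (hvnD z hz) t ht0 (hvτ z hz)
  -- the neighborhood W of x
  have hφtc : Continuous fun y : X => φ t y :=
    hφc.comp (continuous_const.prodMk continuous_id)
  set W := v ∩ (fun y => φ t y) ⁻¹' U with hW
  have hWopen : IsOpen W := hvo.inter (hUopen.preimage hφtc)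
  have hψφx : ψ t x = φ t x := hψφ x hxD t ht0 ht
  have hxW : x ∈ W := ⟨hxV, by simpa [hψφx] using hU⟩
  obtain ⟨y, hyW, s, hs0, hsy⟩ := hx W hWopen hxW
  refine ⟨ψ t y, ?_, s, hs0, ?_⟩
  · rw [hvψφ y hyW.1]; exact hyW.2
  · have h1 : ψ s (ψ t y) = ψ (s + t) y := (hψadd s t hs0.le ht0 y).symm
    have h2 : ψ (t + s) y = ψ t (ψ s y) := hψadd t s ht0 hs0.le y
    rw [h1, add_comm, h2, hvψφ _ hsy.1]
    exact hsy.2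
end

section
/- Let φ be a continuous semiflow on a compact metric space X, D ⊂ X, and I : D → X an impulse with I(D) ∩ D = ∅. Then the impulsive map ψ : ℝ≥0 × X → X defined by ψ(t,x) = γ_x(t) satisfies the semiflow identities ψ(0,x) = x and ψ(s+t,x) = ψ(s, ψ(t,x)) for all s,t ≥ 0 and x ∈ X, provided sup_n τ_n(x) = +∞ for all x. -/
/-- The impulsive map `ψ(t,x) = γ_x(t)` satisfies the semiflow identities,
provided the impulsive times tend to infinity. -/
theorem stmt3
    {X : Type*} [MetricSpace X] [CompactSpace X]
    (φ : ℝ → X → X)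
    (hφc : Continuous fun p : ℝ × X => φ p.1 p.2)
    (hφ0 : ∀ x, φ 0 x = x)
    (hφadd : ∀ s t : ℝ, 0 ≤ s → 0 ≤ t → ∀ x, φ (s + t) x = φ s (φ t x))
    (D : Set X) (I : X → X) (hI : ∀ d ∈ D, I d ∉ D)
    -- first hitting time to `D`
    (τ₁ : X → ℝ)
    (hτ₁pos : ∀ x, 0 < τ₁ x)
    (hτ₁hit : ∀ x, φ (τ₁ x) x ∈ D)
    (hτ₁first : ∀ x, ∀ t : ℝ, 0 < t → t < τ₁ x → φ t x ∉ D)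
    -- impulsive times and impulsive trajectories
    (τ : ℕ → X → ℝ) (γ : X → ℝ → X)
    (hτ0 : ∀ x, τ 0 x = 0)
    (hτrec : ∀ x n, τ (n + 1) x = τ n x + τ₁ (γ x (τ n x)))
    (hγ0 : ∀ x, γ x 0 = x)
    (hγflow : ∀ x n, ∀ t : ℝ, τ n x ≤ t → t < τ (n + 1) x →
      γ x t = φ (t - τ n x) (γ x (τ n x)))
    (hγjump : ∀ x n, γ x (τ (n + 1) x) = I (φ (τ (n + 1) x - τ n x) (γ x (τ n x))))
    (hsup : ∀ x, ∀ T : ℝ, ∃ n, T < τ n x)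
    (ψ : ℝ → X → X) (hψ : ∀ t x, ψ t x = γ x t) :
    (∀ x, ψ 0 x = x) ∧
      ∀ s t : ℝ, 0 ≤ s → 0 ≤ t → ∀ x, ψ (s + t) x = ψ s (ψ t x) := by
  classical
  have hmono : ∀ x n, τ n x < τ (n+1) x := by
    intro x n; rw [hτrec]; linarith [hτ₁pos (γ x (τ n x))]
  have hnonneg : ∀ x n, 0 ≤ τ n x := by
    intro x n
    induction n with
    | zero => rw [hτ0]
    | succ k ih => linarith [hmono x k]
  have hτ₁uniq : ∀ y (r : ℝ), 0 < r → φ r y ∈ D →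
      (∀ u : ℝ, 0 < u → u < r → φ u y ∉ D) → τ₁ y = r := by
    intro y r hr hrD hfirst
    rcases lt_trichotomy (τ₁ y) r with h | h | h
    · exact absurd (hτ₁hit y) (hfirst _ (hτ₁pos y) h)
    · exact h
    · exact absurd hrD (hτ₁first y r hr h)
  have hfind : ∀ x (t : ℝ), 0 ≤ t → ∃ n, τ n x ≤ t ∧ t < τ (n+1) x := by
    intro x t ht
    have hex : ∃ n, t < τ n x := hsup x t
    have hn : t < τ (Nat.find hex) x := Nat.find_spec hex
    have hn0 : Nat.find hex ≠ 0 := by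
      intro h; rw [h, hτ0] at hn; linarith
    obtain ⟨m, hm⟩ := Nat.exists_eq_succ_of_ne_zero hn0
    refine ⟨m, ?_, by rw [hm, Nat.succ_eq_add_one] at hn; exact hn⟩
    by_contra h
    push_neg at h
    exact Nat.find_min hex (by omega) h
  have key : ∀ x (t : ℝ), 0 ≤ t → ∀ s : ℝ, 0 ≤ s → γ (γ x t) s = γ x (t + s) := by
    intro x t ht s hs
    obtain ⟨n, hn1, hn2⟩ := hfind x t ht
    set y := γ x t with hy
    have hyφ : y = φ (t - τ n x) (γ x (τ n x)) := hγflow x n t hn1 hn2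
    have hrecn := hτrec x n
    have hτ1y : τ₁ y = τ (n+1) x - t := by
      apply hτ₁uniq
      · linarith
      · rw [hyφ, ← hφadd _ _ (by linarith) (by linarith)]
        have h1 : τ (n+1) x - t + (t - τ n x) = τ₁ (γ x (τ n x)) := by
          rw [hrecn]; ring
        rw [h1]; exact hτ₁hit _
      · intro u hu hur
        rw [hyφ, ← hφadd _ _ (by linarith) (by linarith)]
        exact hτ₁first _ _ (by linarith) (by rw [hrecn] at hur; linarith)
    have hshift : ∀ m : ℕ, τ (m+1) y = τ (n+m+1) x - t ∧
        γ y (τ (m+1) y) = γ x (τ (n+m+1) x) := by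
      intro m
      induction m with
      | zero =>
        have hτ1 : τ (0+1) y = τ (n+1) x - t := by
          rw [hτrec, hτ0, hγ0, hτ1y]; ring
        constructor
        · simpa using hτ1
        · have hj := hγjump y 0
          rw [hτ1, hτ0, hγ0, sub_zero] at hj
          have : φ (τ (n+1) x - t) y = φ (τ (n+1) x - τ n x) (γ x (τ n x)) := by
            rw [hyφ, ← hφadd _ _ (by linarith) (by linarith)]
            congr 1; ring
          rw [this] at hj
          have hτ1' : τ 1 y = τ (n+1) x - t := by simpa using hτ1
          show γ y (τ (0+1) y) = γ x (τ (n+0+1) x)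
          simp only [Nat.zero_add, Nat.add_zero]
          rw [hτ1', hj]
          exact (hγjump x n).symm
      | succ k ih =>
        obtain ⟨ih1, ih2⟩ := ih
        have hreck := hτrec x (n+k+1)
        have hidx : n + (k+1) + 1 = n + k + 1 + 1 := by omega
        have hτk2 : τ (k+1+1) y = τ (n+(k+1)+1) x - t := by
          rw [hτrec, ih2, ih1, hidx, hreck]; ring
        refine ⟨hτk2, ?_⟩
        rw [hγjump y (k+1), ih2, hτk2, ih1, hidx, hγjump x (n+k+1)]
        have harg : τ (n+k+1+1) x - t - (τ (n+k+1) x - t)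
            = τ (n+k+1+1) x - τ (n+k+1) x := by ring
        rw [harg]
    obtain ⟨m, hm1, hm2⟩ := hfind y s hs
    cases m with
    | zero =>
      have h1y : τ (0+1) y = τ (n+1) x - t := by
        rw [hτrec, hτ0, hγ0, hτ1y]; ring
      have hs2 : s < τ (n+1) x - t := by rw [← h1y]; exact hm2
      have hl : γ y s = φ s y := by
        rw [hγflow y 0 s (by rw [hτ0]; exact hs) hm2, hτ0, hγ0, sub_zero]
      have hr : γ x (t + s) = φ (t + s - τ n x) (γ x (τ n x)) :=
        hγflow x n (t+s) (by linarith) (by linarith)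
      rw [hl, hr, hyφ, ← hφadd _ _ (by linarith) (by linarith)]
      congr 1; ring
    | succ k =>
      obtain ⟨he, hg⟩ := hshift k
      obtain ⟨he2, _⟩ := hshift (k+1)
      have hub : t + s < τ (n+(k+1)+1) x := by
        have : s < τ (n+(k+1)+1) x - t := by rw [← he2]; exact hm2
        linarith
      have hlb : τ (n+k+1) x ≤ t + s := by
        have : τ (n+k+1) x - t ≤ s := by rw [← he]; exact hm1
        linarith
      have hub' : t + s < τ ((n+k+1)+1) x := by
        have : n + (k+1) + 1 = (n+k+1) + 1 := by omega
        rw [← this]; exact hub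
      have hub'' : s < τ ((k+1)+1) y := hm2
      have hl : γ y s = φ (s - τ (k+1) y) (γ y (τ (k+1) y)) :=
        hγflow y (k+1) s hm1 hub''
      have hr : γ x (t+s) = φ (t + s - τ (n+k+1) x) (γ x (τ (n+k+1) x)) :=
        hγflow x (n+k+1) (t+s) hlb hub'
      rw [hl, hr, hg, he]
      congr 1; ring
  constructor
  · intro x; rw [hψ, hγ0]
  · intro s t hs ht x
    rw [hψ, hψ, hψ, add_comm, ← key x t ht s hs]
end
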